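/- On the unit disk, with Ξ = z̄ ∂_z + ∂_{z̄} and f(z) = 1/(1 − |z|²), the rescaled field fΞ commutes with its conjugate: [fΞ, conj(f)·conj(Ξ)] = 0. Equivalently, f solves |z|² f ∂f̄/∂z + z f ∂f̄/∂z̄ − z f̄ ∂f/∂z̄ − f̄ ∂f/∂z + z̄ |f|² = 0. -/

import Mathlib

open Complex

/-- Wirtinger derivative `∂/∂z = (1/2)(∂_x − i ∂_y)` of `f : ℂ → ℂ`. -/
noncomputable def dz1 (f : ℂ → ℂ) (z : ℂ) : ℂ :=
  (1 / 2) * (fderiv ℝ f z 1 - Complex.I * fderiv ℝ f z Complex.I)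

/-- Wirtinger derivative `∂/∂z̄ = (1/2)(∂_x + i ∂_y)`. -/
noncomputable def dzb1 (f : ℂ → ℂ) (z : ℂ) : ℂ :=
  (1 / 2) * (fderiv ℝ f z 1 + Complex.I * fderiv ℝ f z Complex.I)

/-- A complex vector field on `ℂ`, given by its coefficients in `(∂_z, ∂_z̄)`. -/
abbrev VF1 := ℂ → ℂ × ℂ

/-- Action of a complex vector field on a function. -/
noncomputable def appVF1 (X : VF1) (f : ℂ → ℂ) (z : ℂ) : ℂ :=
  (X z).1 * dz1 f z + (X z).2 * dzb1 f z

/-- Lie bracket of complex vector fields on `ℂ`. -/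
noncomputable def bracketVF1 (X Y : VF1) : VF1 := fun z =>
  (appVF1 X (fun q => (Y q).1) z - appVF1 Y (fun q => (X q).1) z,
   appVF1 X (fun q => (Y q).2) z - appVF1 Y (fun q => (X q).2) z)

/-- The field `Ξ = z̄ ∂_z + ∂_z̄`. -/
noncomputable def Xi : VF1 := fun z => ((starRingEnd ℂ) z, 1)

/-- Its conjugate `Ξ̄ = z ∂_z̄ + ∂_z`. -/
noncomputable def Xib : VF1 := fun z => (1, z)

noncomputable def Ffun : ℂ → ℂ := fun z => ((1 / (1 - Complex.normSq z) : ℝ) : ℂ)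

/-!
Both Wirtinger derivatives obey the Leibniz rule, and `f = (1 - z z̄)⁻¹` gives `∂f = f² z̄` and
`∂̄f = f² z`. As `f` is real, `f̄ = f`, and each quantity in the theorem reduces to a multiple of
`f (1 - z z̄) - 1 = 0`.
-/

open ComplexConjugate

section Wirtinger

variable {f g : ℂ → ℂ} {z : ℂ}

theorem dz1_mul (hf : DifferentiableAt ℝ f z) (hg : DifferentiableAt ℝ g z) :
    dz1 (fun q => f q * g q) z = dz1 f z * g z + f z * dz1 g z := by
  simp only [dz1, fderiv_fun_mul hf hg, add_apply, smul_apply, smul_eq_mul]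
  ring

theorem dzb1_mul (hf : DifferentiableAt ℝ f z) (hg : DifferentiableAt ℝ g z) :
    dzb1 (fun q => f q * g q) z = dzb1 f z * g z + f z * dzb1 g z := by
  simp only [dzb1, fderiv_fun_mul hf hg, add_apply, smul_apply, smul_eq_mul]
  ring

theorem dz1_const_sub (c : ℂ) : dz1 (fun q => c - f q) z = -dz1 f z := by
  simp only [dz1, fderiv_const_sub, neg_apply]
  ring

theorem dzb1_const_sub (c : ℂ) : dzb1 (fun q => c - f q) z = -dzb1 f z := by
  simp only [dzb1, fderiv_const_sub, neg_apply]
  ring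

theorem dz1_inv (hf : DifferentiableAt ℝ f z) (h0 : f z ≠ 0) :
    dz1 (fun q => (f q)⁻¹) z = -(f z)⁻¹ ^ 2 * dz1 f z := by
  rw [dz1, dz1, show (fun q => (f q)⁻¹) = Inv.inv ∘ f from rfl,
    fderiv_comp z (differentiableAt_inv h0) hf, fderiv_inv' h0]
  simp only [ContinuousLinearMap.comp_apply, neg_apply, ContinuousLinearMap.mulLeftRight_apply]
  ring

theorem dzb1_inv (hf : DifferentiableAt ℝ f z) (h0 : f z ≠ 0) :
    dzb1 (fun q => (f q)⁻¹) z = -(f z)⁻¹ ^ 2 * dzb1 f z := by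
  rw [dzb1, dzb1, show (fun q => (f q)⁻¹) = Inv.inv ∘ f from rfl,
    fderiv_comp z (differentiableAt_inv h0) hf, fderiv_inv' h0]
  simp only [ContinuousLinearMap.comp_apply, neg_apply, ContinuousLinearMap.mulLeftRight_apply]
  ring

theorem dz1_id : dz1 (fun q => q) z = 1 := by
  norm_num [dz1]

theorem dzb1_id : dzb1 (fun q => q) z = 0 := by
  simp [dzb1]

theorem fderiv_conj : fderiv ℝ (fun q => conj q) z = conjCLE.toContinuousLinearMap :=
  conjCLE.toContinuousLinearMap.hasFDerivAt.fderiv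

theorem dz1_conj : dz1 (fun q => conj q) z = 0 := by
  simp [dz1, fderiv_conj]

theorem dzb1_conj : dzb1 (fun q => conj q) z = 1 := by
  norm_num [dzb1, fderiv_conj]

theorem differentiableAt_mul_conj : DifferentiableAt ℝ (fun q => q * conj q) z :=
  differentiableAt_fun_id.mul differentiable_conj.differentiableAt

theorem dz1_mul_conj : dz1 (fun q => q * conj q) z = conj z := by
  rw [dz1_mul differentiableAt_fun_id differentiable_conj.differentiableAt, dz1_id, dz1_conj]
  ring

theorem dzb1_mul_conj : dzb1 (fun q => q * conj q) z = z := by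
  rw [dzb1_mul differentiableAt_fun_id differentiable_conj.differentiableAt, dzb1_id, dzb1_conj]
  ring

end Wirtinger

theorem Ffun_eq : Ffun = fun q => (1 - q * conj q)⁻¹ := by
  funext q
  simp [Ffun, Complex.mul_conj]

theorem conj_Ffun (q : ℂ) : conj (Ffun q) = Ffun q :=
  conj_ofReal _

section Ffun

variable {z : ℂ}

theorem one_sub_mul_conj_ne_zero (hz : normSq z ≠ 1) : 1 - z * conj z ≠ 0 := by
  rw [Complex.mul_conj, sub_ne_zero]
  exact_mod_cast hz.symm

theorem Ffun_mul_one_sub_mul_conj (hz : normSq z ≠ 1) : Ffun z * (1 - z * conj z) = 1 := by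
  rw [Ffun_eq]
  exact inv_mul_cancel₀ (one_sub_mul_conj_ne_zero hz)

theorem differentiableAt_Ffun (hz : normSq z ≠ 1) : DifferentiableAt ℝ Ffun z := by
  rw [Ffun_eq]
  exact (differentiableAt_mul_conj.const_sub 1).inv (one_sub_mul_conj_ne_zero hz)

theorem dz1_Ffun (hz : normSq z ≠ 1) : dz1 Ffun z = Ffun z ^ 2 * conj z := by
  simp only [Ffun_eq]
  rw [dz1_inv (differentiableAt_mul_conj.const_sub 1) (one_sub_mul_conj_ne_zero hz),
    dz1_const_sub, dz1_mul_conj]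
  ring

theorem dzb1_Ffun (hz : normSq z ≠ 1) : dzb1 Ffun z = Ffun z ^ 2 * z := by
  simp only [Ffun_eq]
  rw [dzb1_inv (differentiableAt_mul_conj.const_sub 1) (one_sub_mul_conj_ne_zero hz),
    dzb1_const_sub, dzb1_mul_conj]
  ring

end Ffun

/-- With `f = 1/(1 − |z|²)`, the field `fΞ` commutes with its conjugate:
`[fΞ, f̄ Ξ̄] = 0`; equivalently `f` solves
`|z|² f ∂f̄/∂z + z f ∂f̄/∂z̄ − z f̄ ∂f/∂z̄ − f̄ ∂f/∂z + z̄ |f|² = 0`. -/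
theorem stmt_17 (z : ℂ) (hz : ‖z‖ < 1) :
    bracketVF1 (fun q => (Ffun q * (starRingEnd ℂ) q, Ffun q))
      (fun q => ((starRingEnd ℂ) (Ffun q), (starRingEnd ℂ) (Ffun q) * q)) z
        = (0, 0) ∧
    ((Complex.normSq z : ℝ) : ℂ) * Ffun z *
          dz1 (fun q => (starRingEnd ℂ) (Ffun q)) z +
        z * Ffun z * dzb1 (fun q => (starRingEnd ℂ) (Ffun q)) z -
        z * (starRingEnd ℂ) (Ffun z) * dzb1 Ffun z -
        (starRingEnd ℂ) (Ffun z) * dz1 Ffun z +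
        (starRingEnd ℂ) z * (Ffun z * (starRingEnd ℂ) (Ffun z)) = 0 := by
  have hz' : normSq z ≠ 1 := by
    rw [normSq_eq_norm_sq]
    exact (pow_lt_one₀ (norm_nonneg z) hz two_ne_zero).ne
  have hF := differentiableAt_Ffun hz'
  have hconj := differentiable_conj.differentiableAt (x := z)
  have key := Ffun_mul_one_sub_mul_conj hz'
  simp only [bracketVF1, appVF1, conj_Ffun, Prod.mk.injEq]
  rw [dz1_mul hF hconj, dzb1_mul hF hconj, dz1_mul hF differentiableAt_fun_id,
    dzb1_mul hF differentiableAt_fun_id, dz1_Ffun hz', dzb1_Ffun hz', dz1_conj, dzb1_conj,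
    dz1_id, dzb1_id, ← Complex.mul_conj]
  refine ⟨⟨?_, ?_⟩, ?_⟩
  · linear_combination (Ffun z ^ 2 * z) * key
  · linear_combination (-(Ffun z ^ 2 * (starRingEnd ℂ) z)) * key
  · linear_combination (-(Ffun z ^ 2 * (starRingEnd ℂ) z)) * key
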